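/- arXiv:2007.12936 — 2 statements merged into one kernel-verified Lean document; each statement's English description precedes it below -/
import Mathlib

section
/- For every B ∈ (0,1), writing U₁(x) = (c₁(1-x)/(4μ²))·(ln((1+x)/(1-x)) + 2/(1-B²)) for x ∈ (-1,1), one has U₁'(-B) = -U₁'(B); consequently, if B solves equation (B), the function U (equal to U₁ on (-B,1] and to U₁(-x) + c₂ on (-1,-B]) is continuously differentiable on (-1,1). -/
/-!
For `|x| < 1`, `U₁'(x) = c₁/(4μ²) · (2/(1+x) - ln((1+x)/(1-x)) - 2/(1-B²))`. The logarithm is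
odd, so `U₁'(-B) + U₁'(B) = c₁/(4μ²) · (2/(1-B) + 2/(1+B) - 4/(1-B²)) = 0`: the reflected branch
`x ↦ U₁(-x) + c₂` has the same slope as `U₁` at `-B`. Equation (B) is exactly the condition
`U₁(-B) = U₁(B) + c₂` that the two branches also take the same value there, and two `C¹` functions
glued at a point where their values and derivatives agree give a `C¹` function.
-/

noncomputable section

/-- The function `U₁(x) = (c₁(1-x)/(4μ²))·(ln((1+x)/(1-x)) + 2/(1-B²))`. -/
def U₁ (μ c₁ B x : ℝ) : ℝ :=
  c₁ * (1 - x) / (4 * μ ^ 2) * (Real.log ((1 + x) / (1 - x)) + 2 / (1 - B ^ 2))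

/-- The function `U` of the switching problem: `U(x) = U₁(x)` for `x ∈ (-B, 1]` and
`U(x) = U₁(-x) + c₂` for `x ∈ (-1, -B]`. -/
def Ufun (μ c₁ c₂ B x : ℝ) : ℝ :=
  if -B < x then U₁ μ c₁ B x else U₁ μ c₁ B (-x) + c₂

open Set

theorem contDiffOn_one_iff_deriv_of_isOpen {𝕜 F : Type*} [NontriviallyNormedField 𝕜]
    [NormedAddCommGroup F] [NormedSpace 𝕜 F] {f : 𝕜 → F} {s : Set 𝕜} (hs : IsOpen s) :
    ContDiffOn 𝕜 1 f s ↔ DifferentiableOn 𝕜 f s ∧ ContinuousOn (deriv f) s := by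
  rw [contDiffOn_one_iff_derivWithin hs.uniqueDiffOn]
  exact and_congr_right' (continuousOn_congr fun _ hx => derivWithin_of_isOpen hs hx)

section Gluing

variable {F : Type*} [NormedAddCommGroup F] [NormedSpace ℝ F] {f g : ℝ → F} {a : ℝ}

theorem HasDerivAt.ite_lt_of_eq {e : F} (hf : HasDerivAt f e a) (hg : HasDerivAt g e a)
    (hfg : f a = g a) : HasDerivAt (fun x => if a < x then f x else g x) e a := by
  have hleft : HasDerivWithinAt (fun x => if a < x then f x else g x) e (Iic a) a :=
    hg.hasDerivWithinAt.congr (fun x hx => if_neg (not_lt.2 hx)) (if_neg (lt_irrefl a))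
  have hright : HasDerivWithinAt (fun x => if a < x then f x else g x) e (Ici a) a := by
    refine hf.hasDerivWithinAt.congr (fun x hx => ?_) (by simp [hfg])
    rcases (mem_Ici.1 hx).eq_or_lt with rfl | hlt
    · simp [hfg]
    · exact if_pos hlt
  simpa [Iic_union_Ici] using hleft.union hright

theorem hasDerivAt_ite_lt {x : ℝ} (hf : DifferentiableAt ℝ f x) (hg : DifferentiableAt ℝ g x)
    (hfg : f a = g a) (hfg' : deriv f a = deriv g a) :
    HasDerivAt (fun x => if a < x then f x else g x)
      (if a < x then deriv f x else deriv g x) x := by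
  rcases lt_trichotomy a x with hlt | rfl | hgt
  · rw [if_pos hlt]
    exact hf.hasDerivAt.congr_of_eventuallyEq
      (by filter_upwards [Ioi_mem_nhds hlt] with y hy using if_pos hy)
  · rw [if_neg (lt_irrefl _), ← hfg']
    exact hf.hasDerivAt.ite_lt_of_eq (hfg' ▸ hg.hasDerivAt) hfg
  · rw [if_neg hgt.not_gt]
    exact hg.hasDerivAt.congr_of_eventuallyEq
      (by filter_upwards [Iio_mem_nhds hgt] with y hy using if_neg hy.not_gt)

theorem ContDiffOn.ite_lt {s : Set ℝ} (hs : IsOpen s) (hf : ContDiffOn ℝ 1 f s)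
    (hg : ContDiffOn ℝ 1 g s) (hfg : f a = g a) (hfg' : deriv f a = deriv g a) :
    ContDiffOn ℝ 1 (fun x => if a < x then f x else g x) s := by
  rw [contDiffOn_one_iff_deriv_of_isOpen hs] at hf hg ⊢
  have hderiv (x : ℝ) (hx : x ∈ s) : HasDerivAt (fun x => if a < x then f x else g x)
      (if a < x then deriv f x else deriv g x) x :=
    hasDerivAt_ite_lt (hf.1.differentiableAt (hs.mem_nhds hx))
      (hg.1.differentiableAt (hs.mem_nhds hx)) hfg hfg'
  refine ⟨fun x hx => (hderiv x hx).differentiableAt.differentiableWithinAt, ?_⟩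
  refine ContinuousOn.congr ?_ fun x hx => (hderiv x hx).deriv
  refine ContinuousOn.if (fun x hx => ?_) (hf.2.mono inter_subset_left)
    (hg.2.mono inter_subset_left)
  rw [show {x | a < x} = Ioi a from rfl, frontier_Ioi] at hx
  rw [hx.2]
  exact hfg'

end Gluing

section SwitchingValue

variable (μ c₁ B : ℝ)

theorem contDiffOn_U₁ {n : WithTop ℕ∞} : ContDiffOn ℝ n (U₁ μ c₁ B) (Ioo (-1) 1) := by
  intro x ⟨hx₁, hx₂⟩
  have : (1 + x) / (1 - x) ≠ 0 := by
    apply div_ne_zero <;> linarith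
  unfold U₁
  fun_prop (disch := first | assumption | linarith)

theorem hasDerivAt_U₁ {x : ℝ} (hx : x ∈ Ioo (-1 : ℝ) 1) :
    HasDerivAt (U₁ μ c₁ B)
      (c₁ / (4 * μ ^ 2) * (2 / (1 + x) - Real.log ((1 + x) / (1 - x)) - 2 / (1 - B ^ 2))) x := by
  obtain ⟨hx₁, hx₂⟩ := hx
  have hp : 1 + x ≠ 0 := by linarith
  have hm : 1 - x ≠ 0 := by linarith
  have hq : HasDerivAt (fun y => (1 + y) / (1 - y)) (2 / (1 - x) ^ 2) x :=
    (((hasDerivAt_id' x).const_add 1).div ((hasDerivAt_id' x).const_sub 1) hm).congr_deriv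
      (by ring)
  have hlog := (hq.log (div_ne_zero hp hm)).add_const (2 / (1 - B ^ 2))
  have hlin : HasDerivAt (fun y => c₁ * (1 - y) / (4 * μ ^ 2)) (-c₁ / (4 * μ ^ 2)) x :=
    ((((hasDerivAt_id' x).const_sub 1).const_mul c₁).div_const (4 * μ ^ 2)).congr_deriv
      (by ring)
  refine (hlin.mul hlog).congr_deriv ?_
  field_simp
  ring

theorem deriv_U₁_neg (hB : B ∈ Ioo (-1 : ℝ) 1) :
    deriv (U₁ μ c₁ B) (-B) = -deriv (U₁ μ c₁ B) B := by
  obtain ⟨hB₁, hB₂⟩ := hB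
  have hp : 1 + B ≠ 0 := by linarith
  have hm : 1 - B ≠ 0 := by linarith
  have hsq : 1 - B ^ 2 ≠ 0 := by nlinarith
  rw [(hasDerivAt_U₁ μ c₁ B ⟨by linarith, by linarith⟩).deriv,
    (hasDerivAt_U₁ μ c₁ B ⟨hB₁, hB₂⟩).deriv, sub_neg_eq_add, ← sub_eq_add_neg 1 B,
    Real.log_div hm hp, Real.log_div hp hm]
  field_simp
  ring

theorem U₁_neg_eq_add {c₂ : ℝ} (hμ : μ ≠ 0) (hc₁ : c₁ ≠ 0) (hB : B ∈ Ioo (-1 : ℝ) 1)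
    (hBeq : Real.log ((1 - B) / (1 + B)) + 2 * B / (1 - B ^ 2) = 2 * μ ^ 2 * c₂ / c₁) :
    U₁ μ c₁ B (-B) = U₁ μ c₁ B B + c₂ := by
  obtain ⟨hB₁, hB₂⟩ := hB
  have hp : 1 + B ≠ 0 := by linarith
  have hm : 1 - B ≠ 0 := by linarith
  have hsq : 1 - B ^ 2 ≠ 0 := by nlinarith
  rw [Real.log_div hm hp] at hBeq
  rw [U₁, U₁, sub_neg_eq_add, ← sub_eq_add_neg 1 B, Real.log_div hm hp, Real.log_div hp hm]
  field_simp at hBeq ⊢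
  linear_combination 2 * hBeq

end SwitchingValue

theorem smoothFit_at_minus_B_general (μ c₁ c₂ : ℝ) (hμ : 0 < μ)
    (hc₁ : 0 < c₁) (B : ℝ) (hB : B ∈ Set.Ioo (0 : ℝ) 1) :
    deriv (U₁ μ c₁ B) (-B) = -deriv (U₁ μ c₁ B) B ∧
    (Real.log ((1 - B) / (1 + B)) + 2 * B / (1 - B ^ 2) = 2 * μ ^ 2 * c₂ / c₁ →
      ContDiffOn ℝ 1 (Ufun μ c₁ c₂ B) (Set.Ioo (-1 : ℝ) 1)) := by
  have hB' : B ∈ Ioo (-1 : ℝ) 1 := ⟨by linarith [hB.1], hB.2⟩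
  refine ⟨deriv_U₁_neg μ c₁ B hB', fun hBeq => ?_⟩
  have hreflect : ContDiffOn ℝ 1 (fun x => U₁ μ c₁ B (-x) + c₂) (Ioo (-1) 1) :=
    ((contDiffOn_U₁ μ c₁ B).comp contDiff_neg.contDiffOn
      fun _ hx => neg_mem_Ioo_iff.2 (by simpa using hx)).add
      contDiffOn_const
  refine (contDiffOn_U₁ μ c₁ B).ite_lt isOpen_Ioo hreflect ?_ ?_
  · rw [neg_neg, U₁_neg_eq_add μ c₁ B hμ.ne' hc₁.ne' hB' hBeq]
  · rw [deriv_add_const, deriv_comp_neg, neg_neg, deriv_U₁_neg μ c₁ B hB']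

/-- For every `B ∈ (0,1)`, one has `U₁'(-B) = -U₁'(B)`; consequently,
if `B` solves equation (B), the function `U` (equal to `U₁` on `(-B,1]` and to
`U₁(-x) + c₂` on `(-1,-B]`) is continuously differentiable on `(-1,1)`. -/
theorem smoothFit_at_minus_B (μ c₀ c₁ c₂ : ℝ) (hμ : 0 < μ) (hc₀ : 0 < c₀)
    (hc₁ : 0 < c₁) (hc₂ : 0 < c₂) (B : ℝ) (hB : B ∈ Set.Ioo (0 : ℝ) 1) :
    deriv (U₁ μ c₁ B) (-B) = -deriv (U₁ μ c₁ B) B ∧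
    (Real.log ((1 - B) / (1 + B)) + 2 * B / (1 - B ^ 2) = 2 * μ ^ 2 * c₂ / c₁ →
      ContDiffOn ℝ 1 (Ufun μ c₁ c₂ B) (Set.Ioo (-1 : ℝ) 1)) :=
  smoothFit_at_minus_B_general μ c₁ c₂ hμ hc₁ B hB
end
end

section
/- Let B ∈ (0,1) solve equation (B) and let A ∈ (0,1) solve equation (A) with this B, and define U and V₀ (with the constant K) as below. Then V₀(x) ≤ U(|x|) for every x with |x| < A. -/
noncomputable section

/-- The constant `K` of the continuous-fit condition. -/
def Kconst (μ c₀ c₁ A B : ℝ) : ℝ :=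
  (c₁ * (1 - A) / (4 * μ ^ 2) + c₀ * A / (2 * μ ^ 2)) * Real.log ((1 + A) / (1 - A))
    + c₁ * (1 - A) / (2 * μ ^ 2 * (1 - B ^ 2))

/-- The function `V₀(x) = (c₀x/(2μ²))·ln((1-x)/(1+x)) + K`. -/
def V₀ (μ c₀ c₁ A B x : ℝ) : ℝ :=
  c₀ * x / (2 * μ ^ 2) * Real.log ((1 - x) / (1 + x)) + Kconst μ c₀ c₁ A B

/-!
On `[0, A]` consider the gap `U₁ - V₀`. The constant `K` is chosen so that it vanishes at `A`,
and its derivative is `gapDeriv / (2μ²)`, where equation (A) says exactly that `gapDeriv`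
vanishes at `A`. Now `gapDeriv 0 < 0` because `B > 0`, and the derivative of `gapDeriv` has the
sign of `2c₀ - c₁ + c₁x`, so `gapDeriv` first decreases and then increases; hence
`gapDeriv ≤ max (gapDeriv 0) (gapDeriv A) = 0` on `[0, A]`. The gap therefore decreases to
its value `0` at `A`. Finally `V₀` is even and `U = U₁` on `[0, 1)`.
-/

open Set Real

theorem le_max_of_hasDerivAt_nonpos_of_nonneg {f f' : ℝ → ℝ} {a b c : ℝ}
    (hf : ∀ x ∈ Icc a b, HasDerivAt f (f' x) x)
    (hf'_nonpos : ∀ x ∈ Ioo a b, x < c → f' x ≤ 0)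
    (hf'_nonneg : ∀ x ∈ Ioo a b, c < x → 0 ≤ f' x) :
    ∀ x ∈ Icc a b, f x ≤ max (f a) (f b) := by
  have hcont : ∀ s ⊆ Icc a b, ContinuousOn f s := fun s hs y hy =>
    (hf y (hs hy)).continuousAt.continuousWithinAt
  have hderiv : ∀ p q, Icc p q ⊆ Icc a b →
      ∀ y ∈ interior (Icc p q), HasDerivWithinAt f (f' y) (interior (Icc p q)) y :=
    fun p q hs y hy => (hf y (hs (interior_subset hy))).hasDerivWithinAt
  intro x hx
  rcases le_or_gt x c with hxc | hcx
  · have hsub : Icc a x ⊆ Icc a b := Icc_subset_Icc_right hx.2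
    have hanti : AntitoneOn f (Icc a x) :=
      antitoneOn_of_hasDerivWithinAt_nonpos (convex_Icc a x) (hcont _ hsub) (hderiv a x hsub)
        fun y hy => by
          rw [interior_Icc] at hy
          exact hf'_nonpos y ⟨hy.1, hy.2.trans_le hx.2⟩ (hy.2.trans_le hxc)
    exact le_max_of_le_left (hanti (left_mem_Icc.2 hx.1) (right_mem_Icc.2 hx.1) hx.1)
  · have hsub : Icc x b ⊆ Icc a b := Icc_subset_Icc_left hx.1
    have hmono : MonotoneOn f (Icc x b) :=
      monotoneOn_of_hasDerivWithinAt_nonneg (convex_Icc x b) (hcont _ hsub) (hderiv x b hsub)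
        fun y hy => by
          rw [interior_Icc] at hy
          exact hf'_nonneg y ⟨hx.1.trans_lt hy.1, hy.2⟩ (hcx.trans hy.1)
    exact le_max_of_le_right (hmono (left_mem_Icc.2 hx.2) (right_mem_Icc.2 hx.2) hx.2)

theorem hasDerivAt_log_one_add_div_one_sub {x : ℝ} (hx : x ∈ Ioo (-1) 1) :
    HasDerivAt (fun y => log ((1 + y) / (1 - y))) (2 / (1 - x ^ 2)) x := by
  have h₁ : 1 + x ≠ 0 := by linarith [hx.1]
  have h₂ : 1 - x ≠ 0 := by linarith [hx.2]
  have hq := ((hasDerivAt_id x).const_add 1).div ((hasDerivAt_id x).const_sub 1) h₂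
  refine (hq.log (div_ne_zero h₁ h₂)).congr_deriv ?_
  simp only [Pi.div_apply, id]
  rw [show 1 - x ^ 2 = (1 - x) * (1 + x) by ring]
  field_simp
  ring

theorem log_one_sub_div_one_add (x : ℝ) :
    log ((1 - x) / (1 + x)) = -log ((1 + x) / (1 - x)) := by
  rw [← log_inv, inv_div]

theorem V₀_neg (μ c₀ c₁ A B x : ℝ) : V₀ μ c₀ c₁ A B (-x) = V₀ μ c₀ c₁ A B x := by
  rw [V₀, V₀, sub_neg_eq_add, ← sub_eq_add_neg, log_one_sub_div_one_add x]
  ring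

theorem V₀_abs (μ c₀ c₁ A B x : ℝ) : V₀ μ c₀ c₁ A B |x| = V₀ μ c₀ c₁ A B x := by
  rcases abs_choice x with h | h <;> rw [h]
  exact V₀_neg μ c₀ c₁ A B x

theorem U₁_sub_V₀_self (μ c₀ c₁ A B : ℝ) : U₁ μ c₁ B A - V₀ μ c₀ c₁ A B A = 0 := by
  rw [U₁, V₀, Kconst, log_one_sub_div_one_add]
  simp only [div_eq_mul_inv, mul_inv]
  ring

theorem Ufun_of_neg_lt {μ c₁ c₂ B x : ℝ} (hx : -B < x) : Ufun μ c₁ c₂ B x = U₁ μ c₁ B x :=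
  if_pos hx

def gapDeriv (c₀ c₁ B x : ℝ) : ℝ :=
  (c₀ - c₁ / 2) * log ((1 + x) / (1 - x)) + (c₁ - c₀) / (1 + x) + c₀ / (1 - x)
    - c₁ / (1 - B ^ 2)

theorem gapDeriv_zero_neg {c₁ B : ℝ} (c₀ : ℝ) (hc₁ : 0 < c₁) (hB : B ∈ Ioo 0 1) :
    gapDeriv c₀ c₁ B 0 < 0 := by
  have hB2 : 0 < 1 - B ^ 2 := by nlinarith [hB.1, hB.2]
  have h : gapDeriv c₀ c₁ B 0 = -(c₁ * B ^ 2 / (1 - B ^ 2)) := by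
    simp only [gapDeriv, add_zero, sub_zero, div_one, log_one, mul_zero, zero_add]
    field_simp
    ring
  rw [h, neg_neg_iff_pos]
  have := hB.1
  positivity

theorem gapDeriv_eq_zero_of_eq {c₀ c₁ A B : ℝ} (hc₀ : c₀ ≠ 0) (hA : A ∈ Ioo (-1) 1)
    (hAeq : (c₁ / (2 * c₀) - 1) * log ((1 - A) / (1 + A))
        + (2 / (1 + A)) * (c₁ / (2 * c₀) + A / (1 - A)) = c₁ / (c₀ * (1 - B ^ 2))) :
    gapDeriv c₀ c₁ B A = 0 := by
  have h₁ : 1 + A ≠ 0 := by linarith [hA.1]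
  have h₂ : 1 - A ≠ 0 := by linarith [hA.2]
  rw [log_one_sub_div_one_add] at hAeq
  have h : gapDeriv c₀ c₁ B A = c₀ * ((c₁ / (2 * c₀) - 1) * -log ((1 + A) / (1 - A))
      + (2 / (1 + A)) * (c₁ / (2 * c₀) + A / (1 - A)) - c₁ / (c₀ * (1 - B ^ 2))) := by
    rw [gapDeriv]
    field_simp
    ring
  rw [h, hAeq, sub_self, mul_zero]

theorem hasDerivAt_U₁_sub_V₀ {μ : ℝ} (c₀ c₁ A B : ℝ) (hμ : μ ≠ 0) {x : ℝ}
    (hx : x ∈ Ioo (-1) 1) :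
    HasDerivAt (fun y => U₁ μ c₁ B y - V₀ μ c₀ c₁ A B y)
      (gapDeriv c₀ c₁ B x / (2 * μ ^ 2)) x := by
  have hL := hasDerivAt_log_one_add_div_one_sub hx
  have h₁ : 1 + x ≠ 0 := by linarith [hx.1]
  have h₂ : 1 - x ≠ 0 := by linarith [hx.2]
  simp only [U₁, V₀, log_one_sub_div_one_add]
  have hU := ((((hasDerivAt_id x).const_sub 1).const_mul c₁).div_const (4 * μ ^ 2)).mul
    (hL.add_const (2 / (1 - B ^ 2)))
  have hV := (((hasDerivAt_id x).const_mul c₀).div_const (2 * μ ^ 2)).mul hL.neg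
  refine (hU.sub (hV.add_const (Kconst μ c₀ c₁ A B))).congr_deriv ?_
  simp only [Pi.neg_apply, id]
  rw [gapDeriv, show 1 - x ^ 2 = (1 - x) * (1 + x) by ring]
  field_simp
  ring

theorem hasDerivAt_gapDeriv (c₀ c₁ B : ℝ) {x : ℝ} (hx : x ∈ Ioo (-1) 1) :
    HasDerivAt (gapDeriv c₀ c₁ B) (2 * (2 * c₀ - c₁ + c₁ * x) / (1 - x ^ 2) ^ 2) x := by
  have hL := hasDerivAt_log_one_add_div_one_sub hx
  have h₁ : 1 + x ≠ 0 := by linarith [hx.1]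
  have h₂ : 1 - x ≠ 0 := by linarith [hx.2]
  have H := (((hL.const_mul (c₀ - c₁ / 2)).add
    ((hasDerivAt_const x (c₁ - c₀)).div ((hasDerivAt_id x).const_add 1) h₁)).add
    ((hasDerivAt_const x c₀).div ((hasDerivAt_id x).const_sub 1) h₂)).sub_const
      (c₁ / (1 - B ^ 2))
  refine H.congr_deriv ?_
  simp only [id]
  rw [show 1 - x ^ 2 = (1 - x) * (1 + x) by ring]
  field_simp
  ring

theorem gapDeriv_nonpos {c₀ c₁ A B : ℝ} (hc₁ : 0 < c₁) (hB : B ∈ Ioo 0 1) (hA : A < 1)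
    (hgapA : gapDeriv c₀ c₁ B A = 0) : ∀ x ∈ Icc 0 A, gapDeriv c₀ c₁ B x ≤ 0 := by
  have hIcc : Icc 0 A ⊆ Ioo (-1) 1 := fun x hx => ⟨by linarith [hx.1], hx.2.trans_lt hA⟩
  have hden : ∀ x ∈ Ioo 0 A, 0 < (1 - x ^ 2) ^ 2 := fun x hx => by
    have := hIcc (Ioo_subset_Icc_self hx)
    have : 0 < 1 - x ^ 2 := by nlinarith [this.1, this.2]
    positivity
  intro x hx
  calc gapDeriv c₀ c₁ B x ≤ max (gapDeriv c₀ c₁ B 0) (gapDeriv c₀ c₁ B A) :=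
        le_max_of_hasDerivAt_nonpos_of_nonneg (c := (c₁ - 2 * c₀) / c₁)
          (fun y hy => hasDerivAt_gapDeriv c₀ c₁ B (hIcc hy))
          (fun y hy hyc => by
            rw [lt_div_iff₀ hc₁] at hyc
            exact div_nonpos_of_nonpos_of_nonneg (by linarith) (hden y hy).le)
          (fun y hy hyc => by
            rw [div_lt_iff₀ hc₁] at hyc
            exact div_nonneg (by linarith) (hden y hy).le) x hx
    _ = 0 := by rw [hgapA, max_eq_right (gapDeriv_zero_neg c₀ hc₁ hB).le]

theorem U₁_sub_V₀_nonneg {μ c₀ c₁ A B : ℝ} (hμ : 0 < μ) (hc₁ : 0 < c₁) (hB : B ∈ Ioo 0 1)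
    (hA : A < 1) (hgapA : gapDeriv c₀ c₁ B A = 0) :
    ∀ x ∈ Icc 0 A, 0 ≤ U₁ μ c₁ B x - V₀ μ c₀ c₁ A B x := by
  have hIcc : Icc 0 A ⊆ Ioo (-1) 1 := fun x hx => ⟨by linarith [hx.1], hx.2.trans_lt hA⟩
  have hderiv := fun x (hx : x ∈ Icc 0 A) => hasDerivAt_U₁_sub_V₀ c₀ c₁ A B hμ.ne' (hIcc hx)
  have hanti : AntitoneOn (fun y => U₁ μ c₁ B y - V₀ μ c₀ c₁ A B y) (Icc 0 A) :=
    antitoneOn_of_hasDerivWithinAt_nonpos (convex_Icc 0 A)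
      (fun x hx => (hderiv x hx).continuousAt.continuousWithinAt)
      (fun x hx => (hderiv x (interior_subset hx)).hasDerivWithinAt)
      (fun x hx => div_nonpos_of_nonpos_of_nonneg
        (gapDeriv_nonpos hc₁ hB hA hgapA x (interior_subset hx)) (by positivity))
  intro x hx
  calc 0 = U₁ μ c₁ B A - V₀ μ c₀ c₁ A B A := (U₁_sub_V₀_self μ c₀ c₁ A B).symm
    _ ≤ U₁ μ c₁ B x - V₀ μ c₀ c₁ A B x := hanti hx (right_mem_Icc.2 (hx.1.trans hx.2)) hx.2

theorem V₀_le_U_general (μ c₀ c₁ c₂ : ℝ) (hμ : 0 < μ) (hc₀ : 0 < c₀) (hc₁ : 0 < c₁)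
    (A B : ℝ) (hB : B ∈ Set.Ioo (0 : ℝ) 1)
    (hA : A ∈ Set.Ioo (0 : ℝ) 1)
    (hAeq : (c₁ / (2 * c₀) - 1) * Real.log ((1 - A) / (1 + A))
        + (2 / (1 + A)) * (c₁ / (2 * c₀) + A / (1 - A)) = c₁ / (c₀ * (1 - B ^ 2))) :
    ∀ x : ℝ, |x| < A → V₀ μ c₀ c₁ A B x ≤ Ufun μ c₁ c₂ B |x| := by
  have hgapA : gapDeriv c₀ c₁ B A = 0 :=
    gapDeriv_eq_zero_of_eq hc₀.ne' ⟨by linarith [hA.1], hA.2⟩ hAeq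
  intro x hx
  have hgap := U₁_sub_V₀_nonneg hμ hc₁ hB hA.2 hgapA |x| ⟨abs_nonneg x, hx.le⟩
  rw [← V₀_abs, Ufun_of_neg_lt (by linarith [hB.1, abs_nonneg x])]
  linarith

/-- Let `B ∈ (0,1)` solve equation (B) and let `A ∈ (0,1)` solve
equation (A) with this `B`. Then `V₀(x) ≤ U(|x|)` for every `x` with `|x| < A`. -/
theorem V₀_le_U (μ c₀ c₁ c₂ : ℝ) (hμ : 0 < μ) (hc₀ : 0 < c₀) (hc₁ : 0 < c₁)
    (hc₂ : 0 < c₂) (A B : ℝ) (hB : B ∈ Set.Ioo (0 : ℝ) 1)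
    (hBeq : Real.log ((1 - B) / (1 + B)) + 2 * B / (1 - B ^ 2) = 2 * μ ^ 2 * c₂ / c₁)
    (hA : A ∈ Set.Ioo (0 : ℝ) 1)
    (hAeq : (c₁ / (2 * c₀) - 1) * Real.log ((1 - A) / (1 + A))
        + (2 / (1 + A)) * (c₁ / (2 * c₀) + A / (1 - A)) = c₁ / (c₀ * (1 - B ^ 2))) :
    ∀ x : ℝ, |x| < A → V₀ μ c₀ c₁ A B x ≤ Ufun μ c₁ c₂ B |x| :=
  V₀_le_U_general μ c₀ c₁ c₂ hμ hc₀ hc₁ A B hB hA hAeq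

end
end
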